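/- Let τ ∈ (0,1), h > 0, let K : ℝ → ℝ be a nonnegative measurable kernel with ∫_{-∞}^{∞} K(t) dt = 1 and ζ₁ = ∫_{-∞}^{∞} |t| K(t) dt < ∞, and let (Z_i, Y_i) ∈ ℝ^p × ℝ, i = 1, …, n, be given data. Define the smoothed empirical quantile objective Q̂_h(θ) = (1/n) Σ_{i=1}^n ℓ_h(Y_i − ⟨Z_i, θ⟩) for θ ∈ ℝ^p. Then Q̂_h is differentiable on ℝ^p and its gradient is ∇Q̂_h(θ) = (1/n) Σ_{i=1}^n [ K̄((⟨Z_i, θ⟩ − Y_i)/h) − τ ] Z_i, where K̄(t) = ∫_{-∞}^{t} K(s) ds. -/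

import Mathlib

open MeasureTheory

/-- The quantile loss `ρ_τ(t) = t (τ - 1{t<0})`. -/
noncomputable def rho (τ t : ℝ) : ℝ := t * (τ - if t < 0 then 1 else 0)

/-- The integrated kernel `K̄(t) = ∫_{-∞}^t K(s) ds`. -/
noncomputable def Kbar (K : ℝ → ℝ) (t : ℝ) : ℝ := ∫ s in Set.Iic t, K s

/-- The convolution-smoothed quantile loss
`ℓ_h(r) = (1/h) ∫ ρ_τ(t) K((t - r)/h) dt`. -/
noncomputable def smoothedLoss (τ : ℝ) (K : ℝ → ℝ) (h r : ℝ) : ℝ :=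
  (1 / h) * ∫ t, rho τ t * K ((t - r) / h)

lemma rho_eq_max {τ : ℝ} (hτ0 : 0 < τ) (hτ1 : τ < 1) (t : ℝ) :
    rho τ t = max (τ * t) ((τ - 1) * t) := by
  unfold rho
  rcases lt_or_ge t 0 with ht | ht
  · rw [if_pos ht, max_eq_right (by nlinarith)]; ring
  · rw [if_neg (not_lt.mpr ht), max_eq_left (by nlinarith)]; ring

lemma rho_lip {τ : ℝ} (hτ0 : 0 < τ) (hτ1 : τ < 1) : LipschitzWith 1 (rho τ) := by
  apply LipschitzWith.of_dist_le_mul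
  intro s t
  rw [Real.dist_eq, Real.dist_eq, rho_eq_max hτ0 hτ1, rho_eq_max hτ0 hτ1]
  refine (abs_max_sub_max_le_max _ _ _ _).trans ?_
  rw [NNReal.coe_one, one_mul]
  have h1 : |τ * s - τ * t| = τ * |s - t| := by
    rw [← mul_sub, abs_mul, abs_of_pos hτ0]
  have h2 : |(τ - 1) * s - (τ - 1) * t| = (1 - τ) * |s - t| := by
    rw [← mul_sub, abs_mul, abs_of_neg (by linarith : τ - 1 < 0)]; ring
  rw [h1, h2]
  have := abs_nonneg (s - t)
  exact max_le (by nlinarith) (by nlinarith)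

lemma rho_abs_le {τ : ℝ} (hτ0 : 0 < τ) (hτ1 : τ < 1) (t : ℝ) : |rho τ t| ≤ |t| := by
  unfold rho
  rw [abs_mul]
  have hb : |τ - if t < 0 then (1 : ℝ) else 0| ≤ 1 := by
    split_ifs <;> rw [abs_le] <;> constructor <;> linarith
  calc |t| * |τ - if t < 0 then (1 : ℝ) else 0| ≤ |t| * 1 :=
        mul_le_mul_of_nonneg_left hb (abs_nonneg t)
    _ = |t| := mul_one _

lemma rho_hasDerivAt {τ t : ℝ} (ht : t ≠ 0) :
    HasDerivAt (rho τ) (τ - if t < 0 then 1 else 0) t := by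
  rcases ht.lt_or_gt with h | h
  · rw [if_pos h]
    have hlin : HasDerivAt (fun s : ℝ => s * (τ - 1)) (τ - 1) t :=
      hasDerivAt_mul_const (τ - 1)
    refine hlin.congr_of_eventuallyEq ?_
    filter_upwards [Iio_mem_nhds h] with s hs
    have hs' : s < 0 := hs
    simp only [rho, if_pos hs']
  · rw [if_neg (not_lt.mpr h.le)]
    have hlin : HasDerivAt (fun s : ℝ => s * (τ - 0)) (τ - 0) t :=
      hasDerivAt_mul_const (τ - 0)
    refine hlin.congr_of_eventuallyEq ?_
    filter_upwards [Ioi_mem_nhds h] with s hs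
    have hs' : ¬ s < 0 := not_lt.mpr (le_of_lt hs)
    simp only [rho, if_neg hs']

lemma K_integrable {K : ℝ → ℝ} (hKint : ∫ t, K t = 1) : Integrable K := by
  by_contra hK
  rw [integral_undef hK] at hKint
  norm_num at hKint

/-- The substituted form of the smoothed loss. -/
lemma smoothedLoss_eq {τ h : ℝ} (hh : 0 < h) (K : ℝ → ℝ) (r : ℝ) :
    smoothedLoss τ K h r = ∫ u, rho τ (r + h * u) * K u := by
  unfold smoothedLoss
  have h0 : h ≠ 0 := hh.ne'
  have e1 : (fun u : ℝ => rho τ (r + h * u) * K u)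
      = fun u : ℝ => (fun x : ℝ => rho τ (x + r) * K ((x + r - r) / h)) (h * u) := by
    funext u
    simp only
    rw [add_sub_cancel_right, mul_div_cancel_left₀ _ h0, add_comm]
  rw [e1, Measure.integral_comp_mul_left
      (fun x : ℝ => rho τ (x + r) * K ((x + r - r) / h)) h]
  have e2 : (∫ x : ℝ, rho τ (x + r) * K ((x + r - r) / h))
      = ∫ x : ℝ, (fun t : ℝ => rho τ t * K ((t - r) / h)) (x + r) := rfl
  rw [e2, integral_add_right_eq_self (fun t : ℝ => rho τ t * K ((t - r) / h)) r,
      abs_of_pos (inv_pos.mpr hh), smul_eq_mul, one_div]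

lemma L_hasDerivAt {τ h : ℝ} (hτ0 : 0 < τ) (hτ1 : τ < 1) (hh : 0 < h)
    {K : ℝ → ℝ} (hKmeas : Measurable K) (hKnonneg : ∀ t, 0 ≤ K t)
    (hKint : ∫ t, K t = 1) (hζ1 : Integrable (fun t => |t| * K t)) (r : ℝ) :
    HasDerivAt (fun x => ∫ u, rho τ (x + h * u) * K u) (τ - Kbar K (-r / h)) r := by
  have hK : Integrable K := K_integrable hKint
  have rho_cont : Continuous (rho τ) := by
    have e : rho τ = fun t => max (τ * t) ((τ - 1) * t) := funext (rho_eq_max hτ0 hτ1)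
    rw [e]; fun_prop
  set F' : ℝ → ℝ := fun u => (τ - if r + h * u < 0 then 1 else 0) * K u with hF'
  have hmeas : ∀ x : ℝ, AEStronglyMeasurable (fun u => rho τ (x + h * u) * K u) volume := by
    intro x
    exact ((rho_cont.measurable.comp
      (measurable_const.add (measurable_const.mul measurable_id))).mul
        hKmeas).aestronglyMeasurable
  have hint : Integrable (fun u => rho τ (r + h * u) * K u) := by
    refine Integrable.mono' ((hK.const_mul |r|).add (hζ1.const_mul h)) (hmeas r) ?_
    filter_upwards with u
    rw [Real.norm_eq_abs, abs_mul, abs_of_nonneg (hKnonneg u)]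
    have h1 : |rho τ (r + h * u)| ≤ |r| + h * |u| := by
      calc |rho τ (r + h * u)| ≤ |r + h * u| := rho_abs_le hτ0 hτ1 _
        _ ≤ |r| + |h * u| := abs_add_le _ _
        _ = |r| + h * |u| := by rw [abs_mul, abs_of_pos hh]
    calc |rho τ (r + h * u)| * K u ≤ (|r| + h * |u|) * K u :=
          mul_le_mul_of_nonneg_right h1 (hKnonneg u)
      _ = |r| * K u + h * (|u| * K u) := by ring
  have hF'meas : AEStronglyMeasurable F' volume := by
    apply Measurable.aestronglyMeasurable
    apply Measurable.mul _ hKmeas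
    apply Measurable.sub measurable_const
    exact Measurable.ite
      (measurableSet_lt (measurable_const.add (measurable_const.mul measurable_id))
        measurable_const) measurable_const measurable_const
  have hlip : ∀ᵐ u : ℝ, LipschitzOnWith (Real.nnabs (K u))
      (fun x => rho τ (x + h * u) * K u) (Metric.ball r 1) := by
    filter_upwards with u
    apply LipschitzWith.lipschitzOnWith
    apply LipschitzWith.of_dist_le_mul
    intro x y
    rw [Real.dist_eq, Real.dist_eq, ← sub_mul, abs_mul]
    have hrl : |rho τ (x + h * u) - rho τ (y + h * u)| ≤ |x - y| := by
      have := (rho_lip hτ0 hτ1).dist_le_mul (x + h * u) (y + h * u)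
      simpa [Real.dist_eq, add_sub_add_right_eq_sub] using this
    have hcoe : ((Real.nnabs (K u) : NNReal) : ℝ) = |K u| := Real.coe_nnabs _
    calc |rho τ (x + h * u) - rho τ (y + h * u)| * |K u| ≤ |x - y| * |K u| :=
          mul_le_mul_of_nonneg_right hrl (abs_nonneg _)
      _ = ((Real.nnabs (K u) : NNReal) : ℝ) * |x - y| := by rw [hcoe]; ring
  have hdiff : ∀ᵐ u : ℝ, HasDerivAt (fun x => rho τ (x + h * u) * K u) (F' u) r := by
    have hnull : volume {u : ℝ | r + h * u = 0} = 0 := by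
      refine measure_mono_null (fun u hu => ?_) (measure_singleton (-r / h))
      simp only [Set.mem_setOf_eq] at hu
      simp only [Set.mem_singleton_iff]
      field_simp
      linarith
    have hae : ∀ᵐ u : ℝ, r + h * u ≠ 0 := by
      rw [ae_iff]
      simpa using hnull
    filter_upwards [hae] with u hu
    have h1 : HasDerivAt (fun x : ℝ => x + h * u) 1 r := (hasDerivAt_id r).add_const _
    have h2 := (rho_hasDerivAt (τ := τ) hu).comp r h1
    have h3 := h2.mul_const (K u)
    simpa [Function.comp, hF'] using h3
  have main := hasDerivAt_integral_of_dominated_loc_of_lip (F' := F') (bound := K)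
    (Metric.ball_mem_nhds r one_pos) (Filter.Eventually.of_forall hmeas) hint hF'meas hlip hK hdiff
  have hval : ∫ u, F' u = τ - Kbar K (-r / h) := by
    have hiff : ∀ u : ℝ, (r + h * u < 0) ↔ u ∈ Set.Iio (-r / h) := by
      intro u
      rw [Set.mem_Iio, lt_div_iff₀ hh, mul_comm]
      constructor <;> intro hx <;> linarith
    have e : F' = fun u => τ * K u - Set.indicator (Set.Iio (-r / h)) K u := by
      funext u
      rw [hF']
      simp only
      rw [Set.indicator_apply]
      by_cases hu : u ∈ Set.Iio (-r / h)
      · rw [if_pos ((hiff u).mpr hu), if_pos hu]; ring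
      · rw [if_neg (fun hc => hu ((hiff u).mp hc)), if_neg hu]; ring
    rw [e, integral_sub (hK.const_mul τ) (hK.indicator measurableSet_Iio),
        integral_const_mul, hKint, mul_one, integral_indicator measurableSet_Iio]
    congr 1
    unfold Kbar
    exact setIntegral_congr_set Iio_ae_eq_Iic
  exact hval ▸ main.2

/-- for data `(Z_i, Y_i) ∈ ℝ^p × ℝ`, `i = 1, …, n`, the smoothed
empirical quantile objective `Q̂_h(θ) = (1/n) ∑ᵢ ℓ_h(Y_i − ⟨Z_i, θ⟩)` is
differentiable on `ℝ^p` with gradient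
`∇Q̂_h(θ) = (1/n) ∑ᵢ [K̄((⟨Z_i, θ⟩ − Y_i)/h) − τ] Z_i`. -/
theorem stmt3 (τ : ℝ) (hτ : τ ∈ Set.Ioo (0 : ℝ) 1)
    (h : ℝ) (hh : 0 < h)
    (K : ℝ → ℝ) (hKmeas : Measurable K) (hKnonneg : ∀ t, 0 ≤ K t)
    (hKint : ∫ t, K t = 1)
    (hζ1 : Integrable (fun t => |t| * K t))
    (p n : ℕ) (hn : 0 < n)
    (Z : Fin n → EuclideanSpace ℝ (Fin p)) (Y : Fin n → ℝ) :
    ∀ θ : EuclideanSpace ℝ (Fin p),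
      HasGradientAt
        (fun θ' : EuclideanSpace ℝ (Fin p) =>
          (1 / (n : ℝ)) * ∑ i, smoothedLoss τ K h (Y i - (inner ℝ (Z i) θ' : ℝ)))
        ((1 / (n : ℝ)) •
          ∑ i, (Kbar K (((inner ℝ (Z i) θ : ℝ) - Y i) / h) - τ) • Z i) θ := by
  intro θ
  obtain ⟨hτ0, hτ1⟩ := hτ
  have hsl : ∀ r : ℝ, HasDerivAt (smoothedLoss τ K h) (τ - Kbar K (-r / h)) r := by
    intro r
    have heq : smoothedLoss τ K h = fun x => ∫ u, rho τ (x + h * u) * K u :=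
      funext (smoothedLoss_eq hh K)
    rw [heq]
    exact L_hasDerivAt hτ0 hτ1 hh hKmeas hKnonneg hKint hζ1 r
  have key : ∀ i : Fin n, HasFDerivAt
      (fun θ' : EuclideanSpace ℝ (Fin p) => smoothedLoss τ K h (Y i - (inner ℝ (Z i) θ' : ℝ)))
      ((Kbar K (((inner ℝ (Z i) θ : ℝ) - Y i) / h) - τ) • (innerSL ℝ (Z i))) θ := by
    intro i
    have hg : HasFDerivAt (fun θ' : EuclideanSpace ℝ (Fin p) => Y i - (inner ℝ (Z i) θ' : ℝ))
        (-(innerSL ℝ (Z i))) θ := by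
      simpa using (innerSL ℝ (Z i)).hasFDerivAt.const_sub (Y i)
    have hc := (hsl (Y i - (inner ℝ (Z i) θ : ℝ))).comp_hasFDerivAt θ hg
    have harg : -(Y i - (inner ℝ (Z i) θ : ℝ)) / h = ((inner ℝ (Z i) θ : ℝ) - Y i) / h := by
      rw [neg_sub]
    rw [harg] at hc
    have hder : (τ - Kbar K (((inner ℝ (Z i) θ : ℝ) - Y i) / h)) • -(innerSL ℝ (Z i))
        = (Kbar K (((inner ℝ (Z i) θ : ℝ) - Y i) / h) - τ) • (innerSL ℝ (Z i)) := by
      rw [smul_neg, ← neg_smul, neg_sub]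
    rw [hder] at hc
    exact hc
  have hsum := HasFDerivAt.sum (u := Finset.univ) (fun i _ => key i)
  have hmul := hsum.const_mul (1 / (n : ℝ))
  rw [hasGradientAt_iff_hasFDerivAt]
  convert hmul using 1
  · rfl
  · funext y; simp [Finset.sum_apply]
  apply ContinuousLinearMap.ext
  intro v
  simp [InnerProductSpace.toDual_apply_apply, sum_inner, real_inner_smul_left,
    ContinuousLinearMap.sum_apply, Finset.mul_sum]
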